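/- arXiv:1303.1112 — 6 statements merged into one kernel-verified Lean document; each statement's English description precedes it below -/
import Mathlib

section
/- Every element of the Baumslag–Solitar semigroup S(m,n) is represented by a word of the form x^{k_0} y x^{k_1} y ⋯ y x^{k_j} y x^l where each k_i < n (with j ≥ 0, and possibly no occurrences of y at all, i.e. a word x^l with l ≥ 1). -/
/-- The defining relation of the Baumslag–Solitar semigroup `S(m,n)`:
`y x^m = x^n y`, as a binary relation on the free monoid on two generators
(`0` stands for `x`, `1` stands for `y`).  Since the two sides of the relation
are nonempty words, equalities between nonempty words in the quotient monoid
coincide with equalities in the presented semigroup. -/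
def BSrel (m n : ℕ) : FreeMonoid (Fin 2) → FreeMonoid (Fin 2) → Prop := fun a b =>
  a = FreeMonoid.of 1 * (FreeMonoid.of 0) ^ m ∧ b = (FreeMonoid.of 0) ^ n * FreeMonoid.of 1

/-- The Baumslag–Solitar semigroup `S(m,n)` (inside the presented monoid). -/
abbrev BS (m n : ℕ) := (conGen (BSrel m n)).Quotient

/-- The element `x` of `S(m,n)`. -/
def BSx (m n : ℕ) : BS m n := (conGen (BSrel m n)).mk' (FreeMonoid.of 0)

/-- The element `y` of `S(m,n)`. -/
def BSy (m n : ℕ) : BS m n := (conGen (BSrel m n)).mk' (FreeMonoid.of 1)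

/-- `NormalForm n ks l` is the word `x^{k_0} y x^{k_1} y ⋯ x^{k_j} y x^l`
(with `0` for `x` and `1` for `y`), where `ks = [k_0, …, k_j]`.  When `ks = []`
it is the pure power `x^l`. -/
def NormalForm (ks : List ℕ) (l : ℕ) : FreeMonoid (Fin 2) :=
  (ks.map fun k => (FreeMonoid.of 0) ^ k * FreeMonoid.of 1).prod * (FreeMonoid.of 0) ^ l

/-- In any monoid, if `x^n * y = y * x^m` with `0 < n`, then
`x^l * y = x^(l % n) * y * x^(m * (l / n))` for all `l`. -/
lemma pow_mul_key {M : Type*} [Monoid M] (x y : M) (m n : ℕ) (hn : 0 < n)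
    (h : x ^ n * y = y * x ^ m) :
    ∀ l : ℕ, x ^ l * y = x ^ (l % n) * y * x ^ (m * (l / n)) := by
  intro l
  induction l using Nat.strong_induction_on with
  | _ l ih =>
    by_cases hl : l < n
    · rw [Nat.mod_eq_of_lt hl, Nat.div_eq_of_lt hl, Nat.mul_zero, pow_zero, mul_one]
    · push_neg at hl
      have h1 : x ^ l * y = x ^ (l - n) * y * x ^ m := by
        have : x ^ l = x ^ (l - n) * x ^ n := by
          rw [← pow_add]; congr 1; omega
        rw [this, mul_assoc, h, ← mul_assoc]
      have h2 := ih (l - n) (by omega)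
      rw [h1, h2, Nat.mod_eq_sub_mod hl, Nat.div_eq_sub_div hn hl]
      rw [mul_assoc _ (x ^ (m * ((l - n) / n))), ← pow_add, Nat.mul_succ]
  
lemma BS_key (m n : ℕ) (hn : 0 < n) :
    (BSx m n) ^ n * BSy m n = BSy m n * (BSx m n) ^ m := by
  unfold BSx BSy
  rw [← map_pow, ← map_pow, ← map_mul, ← map_mul]
  exact (Con.eq _).2 (ConGen.Rel.symm (ConGen.Rel.of _ _ ⟨rfl, rfl⟩))

lemma mk'_NF (m n : ℕ) (ks : List ℕ) (l : ℕ) :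
    (conGen (BSrel m n)).mk' (NormalForm ks l) =
      (ks.map fun k => (BSx m n) ^ k * BSy m n).prod * (BSx m n) ^ l := by
  unfold NormalForm BSx BSy
  simp only [map_mul, map_pow, map_list_prod, List.map_map]
  rfl

/-- Every element of `S(m,n)` (i.e. every nonempty word over `{x,y}` up to the defining
congruence) is represented by a word of the form `x^{k_0} y x^{k_1} y ⋯ y x^{k_j} y x^l`
with every `k_i < n`, or by a pure power `x^l` with `l ≥ 1`. -/
theorem stmt2 (m n : ℕ) (hm : 0 < m) (hn : 0 < n) (w : FreeMonoid (Fin 2)) (hw : w ≠ 1) :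
    ∃ (ks : List ℕ) (l : ℕ), (∀ k ∈ ks, k < n) ∧ (ks = [] → 1 ≤ l) ∧
      (conGen (BSrel m n)).mk' w = (conGen (BSrel m n)).mk' (NormalForm ks l) := by
  set c := conGen (BSrel m n) with hc
  have key := pow_mul_key (BSx m n) (BSy m n) m n hn (BS_key m n hn)
  -- induct on the underlying list from the right
  suffices H : ∀ (ws : List (Fin 2)), ws ≠ [] →
      ∃ (ks : List ℕ) (l : ℕ), (∀ k ∈ ks, k < n) ∧ (ks = [] → 1 ≤ l) ∧
        c.mk' (FreeMonoid.ofList ws) = c.mk' (NormalForm ks l) by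
    exact H w.toList (fun h => hw (congrArg FreeMonoid.ofList h))
  intro ws
  induction ws using List.reverseRecOn with
  | nil => intro h; exact absurd rfl h
  | append_singleton ws a ih =>
    intro _
    rcases List.eq_nil_or_concat' ws with rfl | ⟨ws0, b, rfl⟩
    · -- single letter
      fin_cases a
      · refine ⟨[], 1, by simp, fun _ => le_refl 1, ?_⟩
        have h1 : NormalForm [] 1 = FreeMonoid.of 0 := by
          show (List.map _ []).prod * _ = _
          simp only [List.map_nil, List.prod_nil, pow_one, one_mul]
        rw [h1]; rfl
      · refine ⟨[0], 0, by simpa using hn, by simp, ?_⟩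
        have h1 : NormalForm [0] 0 = FreeMonoid.of 1 := by
          show (List.map _ [0]).prod * _ = _
          simp only [List.map_cons, List.map_nil, List.prod_cons, List.prod_nil,
            pow_zero, one_mul, mul_one]
        rw [h1]; rfl
    · have hws : ws0 ++ [b] ≠ [] := by simp
      obtain ⟨ks, l, hks, hl, heq⟩ := ih hws
      set ws := ws0 ++ [b] with hwsdef
      have hsplit : c.mk' (FreeMonoid.ofList (ws ++ [a])) =
          c.mk' (NormalForm ks l) * c.mk' (FreeMonoid.of a) := by
        rw [FreeMonoid.ofList_append, map_mul, heq, FreeMonoid.ofList_singleton]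
      fin_cases a
      · refine ⟨ks, l + 1, hks, fun _ => by omega, ?_⟩
        rw [hsplit, mk'_NF, mk'_NF, pow_succ, ← mul_assoc]
        rfl
      · refine ⟨ks ++ [l % n], m * (l / n), ?_, by simp, ?_⟩
        · intro k hk
          rcases List.mem_append.1 hk with h | h
          · exact hks k h
          · simp at h; subst h; exact Nat.mod_lt _ hn
        · rw [hsplit, mk'_NF, mk'_NF]
          show _ * c.mk' (FreeMonoid.of 1) = _
          have : c.mk' (FreeMonoid.of 1) = BSy m n := rfl
          rw [this, List.map_append, List.prod_append]
          simp only [List.map_cons, List.map_nil, List.prod_cons, List.prod_nil, mul_one]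
          rw [mul_assoc, mul_assoc, mul_assoc]
          congr 1
          rw [← mul_assoc, key l]
end

section
/- In the monoid F × ℕ with generators a=(x²p,0), b=(qrp,1), c=(qr,0), d=(pqr,2), e=(py²,0), f=(x²pq,0), g=(rpqrpq,3), h=(rpy²,0) (F the free monoid on {x,y,p,q,r}), for each α ≥ 0 the element (x²(pqr)^{2α+1}, 3α) has a unique representation as a product of the generators, namely a b^α c d^α. -/
/-- The monoid `F × ℕ`, where `F` is the free monoid on the five letters
`x,y,p,q,r` (encoded as `Fin 5`) and `ℕ` is the additive monoid of natural
numbers (viewed multiplicatively). -/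
abbrev M5 : Type := FreeMonoid (Fin 5) × Multiplicative ℕ

def wx : FreeMonoid (Fin 5) := FreeMonoid.of 0
def wy : FreeMonoid (Fin 5) := FreeMonoid.of 1
def wp : FreeMonoid (Fin 5) := FreeMonoid.of 2
def wq : FreeMonoid (Fin 5) := FreeMonoid.of 3
def wr : FreeMonoid (Fin 5) := FreeMonoid.of 4

def gena : M5 := (wx ^ 2 * wp, Multiplicative.ofAdd 0)
def genb : M5 := (wq * wr * wp, Multiplicative.ofAdd 1)
def genc : M5 := (wq * wr, Multiplicative.ofAdd 0)
def gend : M5 := (wp * wq * wr, Multiplicative.ofAdd 2)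
def gene : M5 := (wp * wy ^ 2, Multiplicative.ofAdd 0)
def genf : M5 := (wx ^ 2 * wp * wq, Multiplicative.ofAdd 0)
def geng : M5 := (wr * wp * wq * wr * wp * wq, Multiplicative.ofAdd 3)
def genh : M5 := (wr * wp * wy ^ 2, Multiplicative.ofAdd 0)

/-! ### Auxiliary machinery -/

/-- The underlying letter list of the word component of an element of `M5`. -/
def wrd (z : M5) : List (Fin 5) := FreeMonoid.toList z.1

@[simp] lemma wrd_a : wrd gena = [0,0,2] := rfl
@[simp] lemma wrd_b : wrd genb = [3,4,2] := rfl
@[simp] lemma wrd_c : wrd genc = [3,4] := rfl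
@[simp] lemma wrd_d : wrd gend = [2,3,4] := rfl
@[simp] lemma wrd_e : wrd gene = [2,1,1] := rfl
@[simp] lemma wrd_f : wrd genf = [0,0,2,3] := rfl
@[simp] lemma wrd_g : wrd geng = [4,2,3,4,2,3] := rfl
@[simp] lemma wrd_h : wrd genh = [4,2,1,1] := rfl

/-- `blocks n` is the list `(p q r)^n` of letters. -/
def blocks : ℕ → List (Fin 5)
  | 0 => []
  | n+1 => 2 :: 3 :: 4 :: blocks n

lemma toList_prod_fst (l : List M5) :
    FreeMonoid.toList l.prod.1 = (l.map wrd).flatten := by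
  induction l with
  | nil => rfl
  | cons z t ih =>
    simp only [List.prod_cons, List.map_cons, List.flatten_cons, Prod.fst_mul,
      FreeMonoid.toList_mul, ih, wrd]

lemma snd_prod (l : List M5) : l.prod.2 = (l.map Prod.snd).prod := by
  induction l with
  | nil => rfl
  | cons z t ih => simp [ih]

lemma toList_pqr_pow (n : ℕ) :
    FreeMonoid.toList ((wp * wq * wr) ^ n) = blocks n := by
  induction n with
  | zero => rfl
  | succ n ih =>
    rw [pow_succ']
    simp only [FreeMonoid.toList_mul, ih]
    rfl

abbrev GenSet : Set M5 := {gena, genb, genc, gend, gene, genf, geng, genh}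

/-- No word over the generators spells `r (pqr)^j`. -/
lemma lemC (l : List M5) (hl : ∀ z ∈ l, z ∈ GenSet) :
    ∀ j : ℕ, (l.map wrd).flatten ≠ 4 :: blocks j := by
  induction l with
  | nil => intro j h; cases j <;> simp [blocks] at h
  | cons z t ih =>
    intro j h
    have hz := hl z List.mem_cons_self
    have ht : ∀ z ∈ t, z ∈ GenSet := fun z hz => hl z (List.mem_cons_of_mem _ hz)
    clear hl
    simp only [GenSet, Set.mem_insert_iff, Set.mem_singleton_iff] at hz
    simp only [List.map_cons, List.flatten_cons] at h
    have iht := ih ht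
    rcases hz with rfl|rfl|rfl|rfl|rfl|rfl|rfl|rfl
    · cases j <;> simp [blocks] at h
    · cases j <;> simp [blocks] at h
    · cases j <;> simp [blocks] at h
    · cases j <;> simp [blocks] at h
    · cases j <;> simp [blocks] at h
    · cases j <;> simp [blocks] at h
    · -- geng
      obtain _|_|j := j
      · simp [blocks] at h
      · simp [blocks] at h
      · simp only [blocks, wrd_g, List.cons_append, List.nil_append,
          List.cons.injEq] at h
        exact iht j (by simp [h.2.2.2.2.2.2])
    · cases j <;> simp [blocks] at h

/-- A word over the generators spelling `(pqr)^j` must be `d^j`. -/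
lemma lemB (l : List M5) (hl : ∀ z ∈ l, z ∈ GenSet) :
    ∀ j : ℕ, (l.map wrd).flatten = blocks j → l = List.replicate j gend := by
  induction l with
  | nil =>
    intro j h
    cases j with
    | zero => rfl
    | succ j => simp [blocks] at h
  | cons z t ih =>
    intro j h
    have hz := hl z List.mem_cons_self
    have ht : ∀ z ∈ t, z ∈ GenSet := fun z hz => hl z (List.mem_cons_of_mem _ hz)
    clear hl
    simp only [GenSet, Set.mem_insert_iff, Set.mem_singleton_iff] at hz
    simp only [List.map_cons, List.flatten_cons] at h
    have iht := ih ht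
    rcases hz with rfl|rfl|rfl|rfl|rfl|rfl|rfl|rfl
    · cases j <;> simp [blocks] at h
    · cases j <;> simp [blocks] at h
    · cases j <;> simp [blocks] at h
    · -- gend
      cases j with
      | zero => simp [blocks] at h
      | succ j =>
        simp only [blocks, wrd_d, List.cons_append, List.nil_append,
          List.cons.injEq] at h
        rw [iht j h.2.2.2, List.replicate_succ]
    · cases j <;> simp [blocks] at h
    · cases j <;> simp [blocks] at h
    · cases j <;> simp [blocks] at h
    · cases j <;> simp [blocks] at h

/-- A word over the generators spelling `qr (pqr)^j` must be `b^k c d^m` with `k+m=j`. -/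
lemma lemA (l : List M5) (hl : ∀ z ∈ l, z ∈ GenSet) :
    ∀ j : ℕ, (l.map wrd).flatten = 3 :: 4 :: blocks j →
      ∃ k m : ℕ, k + m = j ∧
        l = List.replicate k genb ++ [genc] ++ List.replicate m gend := by
  induction l with
  | nil => intro j h; simp at h
  | cons z t ih =>
    intro j h
    have hz := hl z List.mem_cons_self
    have ht : ∀ z ∈ t, z ∈ GenSet := fun z hz => hl z (List.mem_cons_of_mem _ hz)
    clear hl
    simp only [GenSet, Set.mem_insert_iff, Set.mem_singleton_iff] at hz
    simp only [List.map_cons, List.flatten_cons] at h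
    have iht := ih ht
    rcases hz with rfl|rfl|rfl|rfl|rfl|rfl|rfl|rfl
    · simp at h
    · -- genb
      cases j with
      | zero => simp [blocks] at h
      | succ j =>
        simp only [blocks, wrd_b, List.cons_append, List.nil_append,
          List.cons.injEq] at h
        obtain ⟨k, m, hkm, hrec⟩ := iht j (by simp [h.2.2.2])
        exact ⟨k + 1, m, by omega, by simp [hrec, List.replicate_succ]⟩
    · -- genc
      simp only [wrd_c, List.cons_append, List.nil_append, List.cons.injEq] at h
      have := lemB t ht _ h.2.2
      exact ⟨0, j, by omega, by simp [this]⟩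
    · simp at h
    · simp at h
    · simp at h
    · simp at h
    · simp at h

/-- For each `α ≥ 0`, the element `(x²(pqr)^{2α+1}, 3α)` of `F × ℕ` has a unique
representation as a product of the generators `a,…,h`, namely the word `a b^α c d^α`. -/
theorem stmt11 (α : ℕ) (l : List M5)
    (hl : ∀ z ∈ l, z ∈ ({gena, genb, genc, gend, gene, genf, geng, genh} : Set M5))
    (hprod : l.prod = (wx ^ 2 * (wp * wq * wr) ^ (2 * α + 1), Multiplicative.ofAdd (3 * α))) :
    l = [gena] ++ List.replicate α genb ++ [genc] ++ List.replicate α gend := by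
  have h1 : l.prod.1 = wx ^ 2 * (wp * wq * wr) ^ (2 * α + 1) := by rw [hprod]
  have h2 : l.prod.2 = Multiplicative.ofAdd (3 * α) := by rw [hprod]
  have hw : (l.map wrd).flatten = 0 :: 0 :: 2 :: 3 :: 4 :: blocks (2 * α) := by
    rw [← toList_prod_fst, h1]
    have : (2 : ℕ) * α + 1 = (2 * α) + 1 := rfl
    rw [this, pow_succ']
    simp only [FreeMonoid.toList_mul, toList_pqr_pow]
    rfl
  clear hprod
  cases l with
  | nil => simp at hw
  | cons z t =>
    have hz := hl z List.mem_cons_self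
    have ht : ∀ z ∈ t, z ∈ GenSet := fun z hz => hl z (List.mem_cons_of_mem _ hz)
    clear hl
    simp only [GenSet, Set.mem_insert_iff, Set.mem_singleton_iff] at hz
    simp only [List.map_cons, List.flatten_cons] at hw
    rcases hz with rfl|rfl|rfl|rfl|rfl|rfl|rfl|rfl
    · -- gena
      simp only [wrd_a, List.cons_append, List.nil_append, List.cons.injEq] at hw
      obtain ⟨k, m, hkm, hrec⟩ := lemA t ht (2 * α) (by simp [hw.2.2.2])
      subst hrec
      rw [snd_prod] at h2
      simp only [List.map_cons, List.map_append, List.map_replicate,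
        List.prod_cons, List.prod_append, List.prod_replicate,
        List.map_nil, List.prod_nil] at h2
      have h2' := congrArg Multiplicative.toAdd h2
      simp only [toAdd_mul, toAdd_pow, toAdd_ofAdd, gena, genb, genc, gend,
        smul_eq_mul, toAdd_one, mul_one] at h2'
      have hk : k = α := by omega
      have hm : m = α := by omega
      subst hk; subst hm
      rfl
    · simp at hw
    · simp at hw
    · simp at hw
    · simp at hw
    · -- genf
      simp only [wrd_f, List.cons_append, List.nil_append, List.cons.injEq] at hw
      exact absurd (by simp [hw.2.2.2.2] : (t.map wrd).flatten = 4 :: blocks (2*α))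
        (lemC t ht (2 * α))
    · simp at hw
    · simp at hw
end

section
/- In the monoid F × ℕ with generators a,…,h as specified, for each α ≥ 0 the element (x²(pqr)^{2α} pq, 3α) has a unique representation over the generating set, namely f g^α. -/
/-- the period `rpq` -/
def s5 : FreeMonoid (Fin 5) := wr * wp * wq

@[simp] lemma toList_a : FreeMonoid.toList gena.1 = [0,0,2] := rfl
@[simp] lemma toList_b : FreeMonoid.toList genb.1 = [3,4,2] := rfl
@[simp] lemma toList_c : FreeMonoid.toList genc.1 = [3,4] := rfl
@[simp] lemma toList_d : FreeMonoid.toList gend.1 = [2,3,4] := rfl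
@[simp] lemma toList_e : FreeMonoid.toList gene.1 = [2,1,1] := rfl
@[simp] lemma toList_f : FreeMonoid.toList genf.1 = [0,0,2,3] := rfl
@[simp] lemma toList_g : FreeMonoid.toList geng.1 = [4,2,3,4,2,3] := rfl
@[simp] lemma toList_h : FreeMonoid.toList genh.1 = [4,2,1,1] := rfl
@[simp] lemma toList_s5 : FreeMonoid.toList s5 = [4,2,3] := rfl
@[simp] lemma toList_wq : FreeMonoid.toList wq = [3] := rfl

/-- occurrence count of a letter -/
def cnt (i : Fin 5) (w : FreeMonoid (Fin 5)) : ℕ := (FreeMonoid.toList w).count i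

lemma cnt_mul (i : Fin 5) (u v : FreeMonoid (Fin 5)) :
    cnt i (u * v) = cnt i u + cnt i v := by
  simp [cnt, FreeMonoid.toList_mul]

lemma cnt_pow (i : Fin 5) (u : FreeMonoid (Fin 5)) (n : ℕ) :
    cnt i (u ^ n) = n * cnt i u := by
  induction n with
  | zero => simp [cnt]
  | succ k ih => rw [pow_succ, cnt_mul, ih]; ring

lemma cnt_prod (i : Fin 5) (l : List M5) :
    cnt i l.prod.1 = (l.map fun z => cnt i z.1).sum := by
  induction l with
  | nil => simp [cnt]
  | cons z t ih => rw [List.prod_cons, Prod.fst_mul, cnt_mul, ih, List.map_cons, List.sum_cons]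

lemma sum_zero {l : List ℕ} (h : l.sum = 0) : ∀ x ∈ l, x = 0 := by
  induction l with
  | nil => simp
  | cons a t ih =>
    simp only [List.sum_cons] at h
    have ha : a = 0 := by omega
    have ht : t.sum = 0 := by omega
    intro x hx
    rcases List.mem_cons.mp hx with rfl | hx
    · exact ha
    · exact ih ht x hx

lemma shift (n : ℕ) : (wp * wq * wr) ^ n * (wp * wq) = wp * wq * s5 ^ n := by
  induction n with
  | zero => simp
  | succ k ih =>
    rw [pow_succ', mul_assoc, ih, pow_succ']
    simp [s5, mul_assoc]

lemma Wdecomp (n : ℕ) :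
    wx ^ 2 * (wp * wq * wr) ^ n * wp * wq = wx ^ 2 * wp * (wq * s5 ^ n) := by
  rw [mul_assoc (wx ^ 2 * (wp * wq * wr) ^ n), mul_assoc (wx ^ 2), shift]
  simp [mul_assoc]

lemma geng_eq : geng.1 = s5 * s5 := by
  simp [geng, s5, mul_assoc]

/-- key tail lemma -/
lemma tailLemma (α : ℕ) (t : List M5)
    (ht : ∀ z ∈ t, z ∈ ({gena, genb, genc, gend, gene, genf, geng, genh} : Set M5))
    (hw : t.prod.1 = s5 ^ (2 * α)) (hg : t.prod.2 = Multiplicative.ofAdd (3 * α)) :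
    t = List.replicate α geng := by
  induction α generalizing t with
  | zero =>
    cases t with
    | nil => rfl
    | cons z t' =>
      exfalso
      rw [List.prod_cons, Prod.fst_mul] at hw
      have hw' := congrArg FreeMonoid.toList hw
      rw [FreeMonoid.toList_mul] at hw'
      have hz := ht z (by simp)
      simp only [Set.mem_insert_iff, Set.mem_singleton_iff] at hz
      rcases hz with rfl | rfl | rfl | rfl | rfl | rfl | rfl | rfl <;> simp at hw'
  | succ k ih =>
    cases t with
    | nil =>
      exfalso
      have hw' := congrArg FreeMonoid.toList hw
      rw [show 2 * (k + 1) = (2 * k + 1) + 1 by ring, pow_succ'] at hw'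
      simp [FreeMonoid.toList_mul, List.prod_nil] at hw'
    | cons z t' =>
      rw [List.prod_cons, Prod.fst_mul] at hw
      rw [List.prod_cons, Prod.snd_mul] at hg
      have hz := ht z (by simp)
      simp only [Set.mem_insert_iff, Set.mem_singleton_iff] at hz
      rcases hz with rfl | rfl | rfl | rfl | rfl | rfl | rfl | rfl
      · exfalso; have hw' := congrArg FreeMonoid.toList hw; rw [show 2 * (k + 1) = (2 * k + 1) + 1 by ring, pow_succ'] at hw'; rw [FreeMonoid.toList_mul, FreeMonoid.toList_mul] at hw'; simp at hw'
      · exfalso; have hw' := congrArg FreeMonoid.toList hw; rw [show 2 * (k + 1) = (2 * k + 1) + 1 by ring, pow_succ'] at hw'; rw [FreeMonoid.toList_mul, FreeMonoid.toList_mul] at hw'; simp at hw'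
      · exfalso; have hw' := congrArg FreeMonoid.toList hw; rw [show 2 * (k + 1) = (2 * k + 1) + 1 by ring, pow_succ'] at hw'; rw [FreeMonoid.toList_mul, FreeMonoid.toList_mul] at hw'; simp at hw'
      · exfalso; have hw' := congrArg FreeMonoid.toList hw; rw [show 2 * (k + 1) = (2 * k + 1) + 1 by ring, pow_succ'] at hw'; rw [FreeMonoid.toList_mul, FreeMonoid.toList_mul] at hw'; simp at hw'
      · exfalso; have hw' := congrArg FreeMonoid.toList hw; rw [show 2 * (k + 1) = (2 * k + 1) + 1 by ring, pow_succ'] at hw'; rw [FreeMonoid.toList_mul, FreeMonoid.toList_mul] at hw'; simp at hw'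
      · exfalso; have hw' := congrArg FreeMonoid.toList hw; rw [show 2 * (k + 1) = (2 * k + 1) + 1 by ring, pow_succ'] at hw'; rw [FreeMonoid.toList_mul, FreeMonoid.toList_mul] at hw'; simp at hw'
      · have hw2 : geng.1 * t'.prod.1 = geng.1 * s5 ^ (2 * k) := by
          rw [hw, geng_eq, show 2 * (k + 1) = 2 + 2 * k by ring, pow_add, pow_two]
        have hw3 : t'.prod.1 = s5 ^ (2 * k) := mul_left_cancel hw2
        have hg2 : (Multiplicative.ofAdd 3 : Multiplicative ℕ) * t'.prod.2 =
            Multiplicative.ofAdd 3 * Multiplicative.ofAdd (3 * k) := by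
          rw [← ofAdd_add, show (3 : ℕ) + 3 * k = 3 * (k + 1) by ring, ← hg]
          rfl
        have hg3 := mul_left_cancel hg2
        rw [List.replicate_succ, ih t' (fun z hz => ht z (by simp [hz])) hw3 hg3]
      · exfalso; have hw' := congrArg FreeMonoid.toList hw; rw [show 2 * (k + 1) = (2 * k + 1) + 1 by ring, pow_succ'] at hw'; rw [FreeMonoid.toList_mul, FreeMonoid.toList_mul] at hw'; simp at hw'

/-- For each `α ≥ 0`, the element `(x²(pqr)^{2α} pq, 3α)` of `F × ℕ` has a unique
representation as a product of the generators `a,…,h`, namely the word `f g^α`. -/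
theorem stmt12 (α : ℕ) (l : List M5)
    (hl : ∀ z ∈ l, z ∈ ({gena, genb, genc, gend, gene, genf, geng, genh} : Set M5))
    (hprod : l.prod = (wx ^ 2 * (wp * wq * wr) ^ (2 * α) * wp * wq,
      Multiplicative.ofAdd (3 * α))) :
    l = genf :: List.replicate α geng := by
  have hw : l.prod.1 = wx ^ 2 * wp * (wq * s5 ^ (2 * α)) := by
    rw [hprod, ← Wdecomp]
  have hg : l.prod.2 = Multiplicative.ofAdd (3 * α) := by rw [hprod]
  clear hprod
  cases l with
  | nil =>
    exfalso
    have hw' := congrArg FreeMonoid.toList hw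
    simp [FreeMonoid.toList_mul, wx, wp, wq, pow_two] at hw'
  | cons z t =>
    rw [List.prod_cons, Prod.fst_mul] at hw
    rw [List.prod_cons, Prod.snd_mul] at hg
    have hz := hl z (by simp)
    simp only [Set.mem_insert_iff, Set.mem_singleton_iff] at hz
    have hxpq : FreeMonoid.toList (wx ^ 2 * wp * (wq * s5 ^ (2 * α))) =
        [0, 0, 2, 3] ++ FreeMonoid.toList (s5 ^ (2 * α)) := by
      rw [show wx ^ 2 * wp * (wq * s5 ^ (2 * α)) = genf.1 * s5 ^ (2 * α) by
        simp [genf, mul_assoc]]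
      rw [FreeMonoid.toList_mul, toList_f]
    rcases hz with rfl | rfl | rfl | rfl | rfl | rfl | rfl | rfl
    -- gena case: counting contradiction
    · exfalso
      have hw2 : gena.1 * t.prod.1 = gena.1 * (wq * s5 ^ (2 * α)) := by
        rw [hw]; simp [gena, genf, mul_assoc]
      have htw : t.prod.1 = wq * s5 ^ (2 * α) := mul_left_cancel hw2
      have hx0 : (t.map fun z => cnt 0 z.1).sum = 0 := by
        rw [← cnt_prod, htw, cnt_mul, cnt_pow]
        simp [cnt]
      have hy0 : (t.map fun z => cnt 1 z.1).sum = 0 := by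
        rw [← cnt_prod, htw, cnt_mul, cnt_pow]
        simp [cnt]
      have hz0 : ∀ z ∈ t, cnt 0 z.1 = 0 :=
        fun z hz => sum_zero hx0 _ (List.mem_map_of_mem hz)
      have hz1 : ∀ z ∈ t, cnt 1 z.1 = 0 :=
        fun z hz => sum_zero hy0 _ (List.mem_map_of_mem hz)
      have key : ∀ z ∈ t, cnt 3 z.1 = cnt 4 z.1 := by
        intro z hz
        have hmem := hl z (by simp [hz])
        simp only [Set.mem_insert_iff, Set.mem_singleton_iff] at hmem
        rcases hmem with rfl | rfl | rfl | rfl | rfl | rfl | rfl | rfl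
        · exact absurd (hz0 _ hz) (by simp [cnt])
        · rfl
        · rfl
        · rfl
        · exact absurd (hz1 _ hz) (by simp [cnt])
        · exact absurd (hz0 _ hz) (by simp [cnt])
        · rfl
        · exact absurd (hz1 _ hz) (by simp [cnt])
      have hqr : cnt 3 t.prod.1 = cnt 4 t.prod.1 := by
        rw [cnt_prod, cnt_prod, List.map_congr_left key]
      rw [htw, cnt_mul, cnt_mul, cnt_pow, cnt_pow] at hqr
      simp [cnt] at hqr
    -- genb, genc, gend, gene : letter mismatch
    · exfalso
      have hw' := congrArg FreeMonoid.toList hw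
      rw [FreeMonoid.toList_mul, hxpq] at hw'
      simp at hw'
    · exfalso
      have hw' := congrArg FreeMonoid.toList hw
      rw [FreeMonoid.toList_mul, hxpq] at hw'
      simp at hw'
    · exfalso
      have hw' := congrArg FreeMonoid.toList hw
      rw [FreeMonoid.toList_mul, hxpq] at hw'
      simp at hw'
    · exfalso
      have hw' := congrArg FreeMonoid.toList hw
      rw [FreeMonoid.toList_mul, hxpq] at hw'
      simp at hw'
    -- genf : the good case
    · have hw2 : genf.1 * t.prod.1 = genf.1 * s5 ^ (2 * α) := by
        rw [hw]; simp [genf, mul_assoc]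
      have htw : t.prod.1 = s5 ^ (2 * α) := mul_left_cancel hw2
      have htg : t.prod.2 = Multiplicative.ofAdd (3 * α) := by
        have : genf.2 = 1 := rfl
        rwa [this, one_mul] at hg
      rw [tailLemma α t (fun z hz => hl z (by simp [hz])) htw htg]
    -- geng, genh : letter mismatch
    · exfalso
      have hw' := congrArg FreeMonoid.toList hw
      rw [FreeMonoid.toList_mul, hxpq] at hw'
      simp at hw'
    · exfalso
      have hw' := congrArg FreeMonoid.toList hw
      rw [FreeMonoid.toList_mul, hxpq] at hw'
      simp at hw'
end

section
/- In the monoid F × ℕ with generators a,…,h as specified, if β < γ, η ≥ 0 and α ≥ γ, then a b^{β} b^{2(γ−β)} b^{α−γ} c d^α e ≠ f g^{α+η} h; indeed equality of the two sides would force both 2η = γ−β and 3η = γ−β, hence γ = β. -/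
lemma len_pow (a : FreeMonoid (Fin 5)) (n : ℕ) : (a ^ n).length = n * a.length := by
  induction n with
  | zero => simp [pow_zero, FreeMonoid.length_one]
  | succ k ih =>
    rw [pow_succ, FreeMonoid.length_mul, ih]
    ring

/-- If `β < γ ≤ α` and `η ≥ 0`, then `a b^β b^{2(γ−β)} b^{α−γ} c d^α e ≠ f g^{α+η} h` in
`F × ℕ`: equality would force both `2η = γ−β` and `3η = γ−β`, hence `γ = β`. -/
theorem stmt13 (α β γ η : ℕ) (hβγ : β < γ) (hγα : γ ≤ α) :
    gena * genb ^ β * genb ^ (2 * (γ - β)) * genb ^ (α - γ) * genc * gend ^ α * gene ≠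
      genf * geng ^ (α + η) * genh := by
  intro h
  have h1 := congrArg (fun z : M5 => z.1.length) h
  have h2 := congrArg (fun z : M5 => Multiplicative.toAdd z.2) h
  simp only [gena, genb, genc, gend, gene, genf, geng, genh, wx, wy, wp, wq, wr,
    Prod.fst_mul, Prod.snd_mul, Prod.pow_fst, Prod.pow_snd, FreeMonoid.length_mul,
    len_pow, FreeMonoid.length_of, toAdd_mul, toAdd_pow, toAdd_ofAdd, smul_eq_mul] at h1 h2
  omega
end

section
/- In the monoid F × ℕ with generators a,…,h as specified, for all α, β, γ, η with β < γ ≤ α and η ≥ 0, a b^{α+γ−β} c d^α e ≠ f g^η f g^α h, because the free-monoid components differ (the left component contains no second occurrence of the letter x after position 2, while the right component does). -/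
noncomputable def cntx : FreeMonoid (Fin 5) →* Multiplicative ℕ :=
  FreeMonoid.lift (fun i => if i = 0 then Multiplicative.ofAdd 1 else 1)

lemma cntx_mul_apply (u v : FreeMonoid (Fin 5)) : cntx (u * v) = cntx u * cntx v :=
  map_mul _ _ _

lemma cntx_a : cntx gena.1 = Multiplicative.ofAdd 2 := by decide
lemma cntx_b : cntx genb.1 = 1 := by decide
lemma cntx_c : cntx genc.1 = 1 := by decide
lemma cntx_d : cntx gend.1 = 1 := by decide
lemma cntx_e : cntx gene.1 = 1 := by decide
lemma cntx_f : cntx genf.1 = Multiplicative.ofAdd 2 := by decide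
lemma cntx_g : cntx geng.1 = 1 := by decide
lemma cntx_h : cntx genh.1 = 1 := by decide

/-- For all `α, β, γ, η` with `β < γ ≤ α` and `η ≥ 0`,
`a b^{α+γ−β} c d^α e ≠ f g^η f g^α h` in `F × ℕ`: the free-monoid components differ. -/
theorem stmt14 (α β γ η : ℕ) (hβγ : β < γ) (hγα : γ ≤ α) :
    gena * genb ^ (α + γ - β) * genc * gend ^ α * gene ≠
      genf * geng ^ η * genf * geng ^ α * genh := by
  intro h
  have h1 := congrArg (fun m : M5 => (cntx m.1 : Multiplicative ℕ)) h
  simp only [Prod.fst_mul, Prod.pow_fst, cntx_mul_apply, map_pow, cntx_a, cntx_b, cntx_c, cntx_d, cntx_e,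
    cntx_f, cntx_g, cntx_h, one_pow, mul_one, one_mul] at h1
  have : (2 : ℕ) = 4 := by
    simpa using congrArg Multiplicative.toAdd h1
  omega
end

section
/- Let S(m,n) = ⟨x,y | y x^m = x^n y⟩ with m,n ≥ 1. The map sending x to t and y to the stable letter of the Baumslag–Solitar group G(m,n) = ⟨x,y | y x^m = x^n y⟩ (i.e. the natural map from words over {x,y} to G(m,n)) induces a semigroup homomorphism S(m,n) → G(m,n), and the normal form words x^{k_0} y x^{k_1} y ⋯ y x^{k_j} y x^l with 0 ≤ k_i < n represent pairwise distinct elements of G(m,n). -/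
/-- The relator `y x^m (x^n y)⁻¹` of the Baumslag–Solitar group `G(m,n)`
(`0` stands for `x`, `1` for `y`). -/
def BSGrels (m n : ℕ) : Set (FreeGroup (Fin 2)) :=
  {FreeGroup.of 1 * (FreeGroup.of 0) ^ m * ((FreeGroup.of 0) ^ n * FreeGroup.of 1)⁻¹}

/-- The Baumslag–Solitar group `G(m,n) = ⟨x,y | y x^m = x^n y⟩`. -/
abbrev BSG (m n : ℕ) := PresentedGroup (BSGrels m n)

/-- The natural map from words over `{x,y}` to `G(m,n)`. -/
def toBSG (m n : ℕ) : FreeMonoid (Fin 2) →* BSG m n :=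
  FreeMonoid.lift fun i => PresentedGroup.of i

namespace BSP


variable (m n : ℕ)

def bnd (ε : Bool) : ℤ := if ε then n else m
def cbnd (ε : Bool) : ℤ := if ε then m else n

def addXL : ℤ → List (ℤ × Bool) → List (ℤ × Bool)
  | _, [] => []
  | c, (p, ε) :: rest =>
      ((p + c) % bnd m n ε, ε) :: addXL ((p + c) / bnd m n ε * cbnd m n ε) rest

def carry : ℤ → List (ℤ × Bool) → ℤ
  | c, [] => c
  | c, (p, ε) :: rest => carry ((p + c) / bnd m n ε * cbnd m n ε) rest

inductive Valid : List (ℤ × Bool) → Prop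
  | nil : Valid []
  | cons (p : ℤ) (ε : Bool) (rest : List (ℤ × Bool)) :
      0 ≤ p → p < bnd m n ε →
      (∀ p' ε', rest.head? = some (p', ε') → ε' ≠ ε → p' ≠ 0) →
      Valid rest → Valid ((p, ε) :: rest)

variable {m n}

lemma bnd_pos (hm : 1 ≤ m) (hn : 1 ≤ n) (ε : Bool) : 0 < bnd m n ε := by
  cases ε <;> simp [bnd] <;> [exact_mod_cast hm; exact_mod_cast hn]

lemma bnd_ne (hm : 1 ≤ m) (hn : 1 ≤ n) (ε : Bool) : bnd m n ε ≠ 0 := (bnd_pos hm hn ε).ne'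

lemma cbnd_eq_bnd {ε ε' : Bool} (h : ε' ≠ ε) : cbnd m n ε = bnd m n ε' := by
  cases ε <;> cases ε' <;> simp_all [bnd, cbnd]

-- arithmetic helpers
lemma key_mod {b : ℤ} (p d c : ℤ) : ((p + d) % b + c) % b = (p + (c + d)) % b := by
  conv_rhs => rw [show p + (c + d) = (p + d) + c by ring]
  rw [Int.add_emod ((p+d)) c, Int.add_emod ((p+d) % b) c, Int.emod_emod_of_dvd _ dvd_rfl]

lemma key_div {b : ℤ} (hb : b ≠ 0) (p d c : ℤ) :
    ((p + d) % b + c) / b + (p + d) / b = (p + (c + d)) / b := by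
  have h := Int.emod_add_mul_ediv (p + d) b
  have : p + (c + d) = ((p + d) % b + c) + b * ((p+d)/b) := by omega
  rw [this, Int.add_mul_ediv_left _ _ hb]

lemma addXL_addXL (hm : 1 ≤ m) (hn : 1 ≤ n) (c d : ℤ) (L : List (ℤ × Bool)) :
    addXL m n c (addXL m n d L) = addXL m n (c + d) L := by
  induction L generalizing c d with
  | nil => simp [addXL]
  | cons e rest ih =>
      obtain ⟨p, ε⟩ := e
      simp only [addXL, key_mod, List.cons.injEq, Prod.mk.injEq, true_and, and_true]
      rw [ih]
      congr 1
      rw [← add_mul, key_div (bnd_ne hm hn ε)]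

lemma carry_addXL (hm : 1 ≤ m) (hn : 1 ≤ n) (c d : ℤ) (L : List (ℤ × Bool)) :
    carry m n c (addXL m n d L) + carry m n d L = carry m n (c + d) L := by
  induction L generalizing c d with
  | nil => simp [addXL, carry]
  | cons e rest ih =>
      obtain ⟨p, ε⟩ := e
      simp only [addXL, carry]
      rw [ih]
      congr 1
      rw [← add_mul, key_div (bnd_ne hm hn ε)]

lemma valid_elim {p : ℤ} {ε : Bool} {rest : List (ℤ × Bool)}
    (h : Valid m n ((p, ε) :: rest)) :
    0 ≤ p ∧ p < bnd m n ε ∧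
      (∀ p' ε', rest.head? = some (p', ε') → ε' ≠ ε → p' ≠ 0) ∧ Valid m n rest := by
  cases h with
  | cons _ _ _ h1 h2 h3 h4 => exact ⟨h1, h2, h3, h4⟩

lemma addXL_zero {L : List (ℤ × Bool)} (h : Valid m n L) : addXL m n 0 L = L := by
  induction h with
  | nil => simp [addXL]
  | cons p ε rest h1 h2 h3 h4 ih =>
      simp only [addXL, add_zero]
      rw [Int.emod_eq_of_lt h1 h2, Int.ediv_eq_zero_of_lt h1 h2, zero_mul, ih]

lemma carry_zero {L : List (ℤ × Bool)} (h : Valid m n L) : carry m n 0 L = 0 := by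
  induction h with
  | nil => simp [carry]
  | cons p ε rest h1 h2 h3 h4 ih =>
      simp only [carry, add_zero]
      rw [Int.ediv_eq_zero_of_lt h1 h2, zero_mul, ih]

lemma valid_addXL (hm : 1 ≤ m) (hn : 1 ≤ n) (c : ℤ) {L : List (ℤ × Bool)} (h : Valid m n L) :
    Valid m n (addXL m n c L) := by
  induction h generalizing c with
  | nil => exact Valid.nil
  | cons p ε rest h1 h2 h3 h4 ih =>
      refine Valid.cons _ _ _ (Int.emod_nonneg _ (bnd_ne hm hn ε))
        (Int.emod_lt_of_pos _ (bnd_pos hm hn ε)) ?_ (ih _)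
      intro p' ε' hh hne
      match rest, h4 with
      | [], _ => simp [addXL] at hh
      | (q, δ) :: r', h4 =>
          simp only [addXL, List.head?_cons, Option.some.injEq, Prod.mk.injEq] at hh
          obtain ⟨hq, hδ⟩ := hh
          subst hδ
          have hb : cbnd m n ε = bnd m n δ := cbnd_eq_bnd hne
          obtain ⟨hq0, hqlt, _, _⟩ := valid_elim h4
          have : (q + (p + c) / bnd m n ε * cbnd m n ε) % bnd m n δ = q := by
            rw [hb, Int.add_mul_emod_self_right, Int.emod_eq_of_lt hq0 hqlt]
          rw [← hq, this]
          exact h3 q δ (by simp) hne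
def mulYL : List (ℤ × Bool) → List (ℤ × Bool)
  | [] => [(0, true)]
  | (p, ε) :: rest => if ε = false ∧ p = 0 then rest else (0, true) :: (p, ε) :: rest

def mulYL' : List (ℤ × Bool) → List (ℤ × Bool)
  | [] => [(0, false)]
  | (p, ε) :: rest => if ε = true ∧ p = 0 then rest else (0, false) :: (p, ε) :: rest

lemma valid_mulYL (hn : 1 ≤ n) {L : List (ℤ × Bool)} (h : Valid m n L) :
    Valid m n (mulYL L) := by
  match L, h with
  | [], _ =>
      exact Valid.cons 0 true [] le_rfl (by simp [bnd]; exact_mod_cast hn)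
        (by simp) Valid.nil
  | (p, ε) :: rest, h =>
      obtain ⟨h1, h2, h3, h4⟩ := valid_elim h
      by_cases hc : ε = false ∧ p = 0
      · simpa [mulYL, hc] using h4
      · simp only [mulYL, if_neg hc]
        refine Valid.cons 0 true _ le_rfl (by simp [bnd]; exact_mod_cast hn) ?_ h
        intro p' ε' hh hne
        simp only [List.head?_cons, Option.some.injEq, Prod.mk.injEq] at hh
        obtain ⟨hp, hε⟩ := hh
        simp only [ne_eq, ← hε] at hne
        rw [← hp]
        intro h0
        exact hc ⟨by simpa using hne, h0⟩

lemma valid_mulYL' (hm : 1 ≤ m) {L : List (ℤ × Bool)} (h : Valid m n L) :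
    Valid m n (mulYL' L) := by
  match L, h with
  | [], _ =>
      exact Valid.cons 0 false [] le_rfl (by simp [bnd]; exact_mod_cast hm)
        (by simp) Valid.nil
  | (p, ε) :: rest, h =>
      obtain ⟨h1, h2, h3, h4⟩ := valid_elim h
      by_cases hc : ε = true ∧ p = 0
      · simpa [mulYL', hc] using h4
      · simp only [mulYL', if_neg hc]
        refine Valid.cons 0 false _ le_rfl (by simp [bnd]; exact_mod_cast hm) ?_ h
        intro p' ε' hh hne
        simp only [List.head?_cons, Option.some.injEq, Prod.mk.injEq] at hh
        obtain ⟨hp, hε⟩ := hh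
        simp only [ne_eq, ← hε] at hne
        rw [← hp]
        intro h0
        exact hc ⟨by simpa using hne, h0⟩

lemma mulYL'_mulYL {L : List (ℤ × Bool)} (h : Valid m n L) :
    mulYL' (mulYL L) = L := by
  match L, h with
  | [], _ => simp [mulYL, mulYL']
  | (p, ε) :: rest, h =>
      obtain ⟨h1, h2, h3, h4⟩ := valid_elim h
      by_cases hc : ε = false ∧ p = 0
      · simp only [mulYL, if_pos hc]
        match rest, h3 with
        | [], _ => simp [mulYL', hc.1, hc.2]
        | (q, δ) :: r', h3 =>
            have hq : ¬ (δ = true ∧ q = 0) := by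
              rintro ⟨hδ, hq0⟩
              exact h3 q δ (by simp) (by simp [hδ, hc.1]) hq0
            simp [mulYL', if_neg hq, hc.1, hc.2]
      · simp [mulYL, if_neg hc, mulYL']

lemma mulYL_mulYL' {L : List (ℤ × Bool)} (h : Valid m n L) :
    mulYL (mulYL' L) = L := by
  match L, h with
  | [], _ => simp [mulYL, mulYL']
  | (p, ε) :: rest, h =>
      obtain ⟨h1, h2, h3, h4⟩ := valid_elim h
      by_cases hc : ε = true ∧ p = 0
      · simp only [mulYL', if_pos hc]
        match rest, h3 with
        | [], _ => simp [mulYL, hc.1, hc.2]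
        | (q, δ) :: r', h3 =>
            have hq : ¬ (δ = false ∧ q = 0) := by
              rintro ⟨hδ, hq0⟩
              exact h3 q δ (by simp) (by simp [hδ, hc.1]) hq0
            simp [mulYL, if_neg hq, hc.1, hc.2]
      · simp [mulYL', if_neg hc, mulYL]


lemma rel_list (hm : 1 ≤ m) (hn : 1 ≤ n) {L : List (ℤ × Bool)} (h : Valid m n L) :
    mulYL (addXL m n (m : ℤ) L) = addXL m n (n : ℤ) (mulYL L) := by
  have hmz : (m : ℤ) ≠ 0 := by positivity
  have hnz : (n : ℤ) ≠ 0 := by positivity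
  match L, h with
  | [], _ => simp [addXL, mulYL, bnd, cbnd, Int.emod_self]
  | (p, ε) :: rest, h =>
      obtain ⟨h1, h2, h3, h4⟩ := valid_elim h
      by_cases hc : ε = false ∧ p = 0
      · obtain ⟨hε, hp⟩ := hc
        subst hε; subst hp
        simp [addXL, mulYL, bnd, cbnd, Int.emod_self, Int.ediv_self hmz]
      · have hpop : ¬ (ε = false ∧ (p + (m : ℤ)) % bnd m n ε = 0) := by
          rintro ⟨hε, hmod⟩
          subst hε
          rw [show bnd m n false = (m : ℤ) from rfl,
            show p + (m:ℤ) = p + (m:ℤ) * 1 by ring, Int.add_mul_emod_self_left] at hmod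
          have h6 : p % (m:ℤ) = p := Int.emod_eq_of_lt h1 h2
          exact hc ⟨rfl, by omega⟩
        show mulYL (((p + (m:ℤ)) % bnd m n ε, ε) :: _) = _
        rw [mulYL, if_neg hpop]
        have hrhs : mulYL ((p, ε) :: rest) = (0, true) :: (p, ε) :: rest := by
          rw [mulYL, if_neg hc]
        rw [hrhs]
        show _ = ((0 + (n:ℤ)) % bnd m n true, true) ::
          addXL m n ((0 + (n:ℤ)) / bnd m n true * cbnd m n true) ((p, ε) :: rest)
        rw [show bnd m n true = (n:ℤ) from rfl, show cbnd m n true = (m:ℤ) from rfl,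
          zero_add, Int.emod_self, Int.ediv_self hnz, one_mul]
        rfl

lemma rel_carry (hm : 1 ≤ m) (hn : 1 ≤ n) {L : List (ℤ × Bool)} (h : Valid m n L) :
    carry m n (m : ℤ) L = carry m n (n : ℤ) (mulYL L) := by
  have hmz : (m : ℤ) ≠ 0 := by positivity
  have hnz : (n : ℤ) ≠ 0 := by positivity
  match L, h with
  | [], _ =>
      show (m : ℤ) = carry m n (n:ℤ) [(0, true)]
      show (m : ℤ) = carry m n ((0 + (n:ℤ)) / bnd m n true * cbnd m n true) []
      rw [show bnd m n true = (n:ℤ) from rfl, show cbnd m n true = (m:ℤ) from rfl,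
        zero_add, Int.ediv_self hnz, one_mul]
      rfl
  | (p, ε) :: rest, h =>
      by_cases hc : ε = false ∧ p = 0
      · obtain ⟨hε, hp⟩ := hc
        subst hε; subst hp
        show carry m n ((0 + (m:ℤ)) / bnd m n false * cbnd m n false) rest
          = carry m n (n:ℤ) rest
        rw [show bnd m n false = (m:ℤ) from rfl, show cbnd m n false = (n:ℤ) from rfl,
          zero_add, Int.ediv_self hmz, one_mul]
      · have hrhs : mulYL ((p, ε) :: rest) = (0, true) :: (p, ε) :: rest := by
          rw [mulYL, if_neg hc]
        rw [hrhs]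
        show _ = carry m n ((0 + (n:ℤ)) / bnd m n true * cbnd m n true) ((p, ε) :: rest)
        rw [show bnd m n true = (n:ℤ) from rfl, show cbnd m n true = (m:ℤ) from rfl,
          zero_add, Int.ediv_self hnz, one_mul]

abbrev Omega (m n : ℕ) := {v : List (ℤ × Bool) × ℤ // Valid m n v.1}

def addXE (hm : 1 ≤ m) (hn : 1 ≤ n) (c : ℤ) : Equiv.Perm (Omega m n) where
  toFun ω := ⟨(addXL m n c ω.1.1, ω.1.2 + carry m n c ω.1.1), valid_addXL hm hn c ω.2⟩
  invFun ω := ⟨(addXL m n (-c) ω.1.1, ω.1.2 + carry m n (-c) ω.1.1), valid_addXL hm hn _ ω.2⟩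
  left_inv := by
    rintro ⟨⟨L, t⟩, h⟩
    apply Subtype.ext
    have h1 : addXL m n (-c) (addXL m n c L) = L := by
      rw [addXL_addXL hm hn, neg_add_cancel, addXL_zero h]
    have h2 : carry m n (-c) (addXL m n c L) + carry m n c L = 0 := by
      rw [carry_addXL hm hn, neg_add_cancel, carry_zero h]
    simp only [h1, Prod.mk.injEq, true_and]
    omega
  right_inv := by
    rintro ⟨⟨L, t⟩, h⟩
    apply Subtype.ext
    have h1 : addXL m n c (addXL m n (-c) L) = L := by
      rw [addXL_addXL hm hn, add_neg_cancel, addXL_zero h]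
    have h2 : carry m n c (addXL m n (-c) L) + carry m n (-c) L = 0 := by
      rw [carry_addXL hm hn, add_neg_cancel, carry_zero h]
    simp only [h1, Prod.mk.injEq, true_and]
    omega

def mulYE (hm : 1 ≤ m) (hn : 1 ≤ n) : Equiv.Perm (Omega m n) where
  toFun ω := ⟨(mulYL ω.1.1, ω.1.2), valid_mulYL hn ω.2⟩
  invFun ω := ⟨(mulYL' ω.1.1, ω.1.2), valid_mulYL' hm ω.2⟩
  left_inv := by
    rintro ⟨⟨L, t⟩, h⟩
    exact Subtype.ext (by simp only [mulYL'_mulYL h])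
  right_inv := by
    rintro ⟨⟨L, t⟩, h⟩
    exact Subtype.ext (by simp only [mulYL_mulYL' h])

lemma addXE_apply (hm : 1 ≤ m) (hn : 1 ≤ n) (c : ℤ) (ω : Omega m n) :
    addXE hm hn c ω = ⟨(addXL m n c ω.1.1, ω.1.2 + carry m n c ω.1.1),
      valid_addXL hm hn c ω.2⟩ := rfl

lemma addXE_pow (hm : 1 ≤ m) (hn : 1 ≤ n) (k : ℕ) (ω : Omega m n) :
    ((addXE hm hn 1) ^ k) ω = addXE hm hn (k : ℤ) ω := by
  induction k with
  | zero =>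
      simp only [pow_zero, Equiv.Perm.one_apply, Nat.cast_zero, addXE_apply]
      exact Subtype.ext (by simp only [addXL_zero ω.2, carry_zero ω.2, add_zero])
  | succ k ih =>
      rw [pow_succ', Equiv.Perm.mul_apply, ih]
      apply Subtype.ext
      simp only [addXE_apply, addXL_addXL hm hn, Prod.mk.injEq]
      constructor
      · congr 1
        push_cast; ring
      · have h5 := carry_addXL hm hn 1 (k : ℤ) ω.1.1
        push_cast
        rw [show ((k:ℤ) + 1) = 1 + (k:ℤ) by ring]
        omega

lemma rel_perm (hm : 1 ≤ m) (hn : 1 ≤ n) :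
    mulYE hm hn * (addXE hm hn 1) ^ m = (addXE hm hn 1) ^ n * mulYE hm hn := by
  apply Equiv.ext
  intro ω
  rw [Equiv.Perm.mul_apply, Equiv.Perm.mul_apply, addXE_pow, addXE_pow]
  apply Subtype.ext
  have hl := rel_list hm hn ω.2
  have hc := rel_carry hm hn ω.2
  simp only [addXE_apply, mulYE, Equiv.coe_fn_mk, Prod.mk.injEq]
  exact ⟨hl, by rw [hc]⟩


section Hom

variable {m n : ℕ} (hm : 1 ≤ m) (hn : 1 ≤ n)

def gens : Fin 2 → Equiv.Perm (Omega m n) := ![addXE hm hn 1, mulYE hm hn]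

lemma relcheck : ∀ r ∈ BSGrels m n, FreeGroup.lift (gens hm hn) r = 1 := by
  intro r hr
  rw [BSGrels, Set.mem_singleton_iff] at hr
  subst hr
  simp only [map_mul, map_pow, map_inv, FreeGroup.lift_apply_of]
  rw [show gens hm hn 0 = addXE hm hn 1 from rfl,
    show gens hm hn 1 = mulYE hm hn from rfl, mul_inv_eq_one]
  exact rel_perm hm hn

noncomputable def psi : BSG m n →* Equiv.Perm (Omega m n) :=
  PresentedGroup.toGroup (relcheck hm hn)

lemma psi_toBSG (w : FreeMonoid (Fin 2)) :
    psi hm hn (toBSG m n w) = FreeMonoid.lift (gens hm hn) w := by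
  have : (psi hm hn).comp (toBSG m n) = FreeMonoid.lift (gens hm hn) := by
    apply FreeMonoid.hom_eq
    intro i
    simp only [MonoidHom.comp_apply, toBSG, FreeMonoid.lift_eval_of]
    exact PresentedGroup.toGroup.of (relcheck hm hn)
  exact DFunLike.congr_fun this w

def encL : List ℕ → List (ℤ × Bool)
  | [] => []
  | k :: ks => ((k : ℤ), true) :: encL ks

lemma encL_inj : ∀ {ks ks' : List ℕ}, encL ks = encL ks' → ks = ks'
  | [], [], _ => rfl
  | [], _ :: _, h => by simp [encL] at h
  | _ :: _, [], h => by simp [encL] at h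
  | k :: ks, k' :: ks', h => by
      simp only [encL, List.cons.injEq, Prod.mk.injEq] at h
      obtain ⟨⟨h1, -⟩, h2⟩ := h
      rw [List.cons.injEq]
      exact ⟨by exact_mod_cast h1, encL_inj h2⟩

lemma valid_encL {ks : List ℕ} (hks : ∀ k ∈ ks, k < n) : Valid m n (encL ks) := by
  induction ks with
  | nil => exact Valid.nil
  | cons k ks ih =>
      show Valid m n (((k : ℤ), true) :: encL ks)
      refine Valid.cons _ _ _ (Int.natCast_nonneg k) ?_ ?_ (ih fun a ha => hks a (by simp [ha]))
      · show ((k : ℤ)) < (n : ℤ)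
        exact_mod_cast hks k (by simp)
      · intro p' ε' hh hne
        rcases ks with _ | ⟨k', ks'⟩
        · exact absurd hh (by simp [encL])
        · have hh0 : (encL (k' :: ks')).head? = some (((k' : ℤ)), true) := rfl
          rw [hh0, Option.some.injEq, Prod.mk.injEq] at hh
          exact absurd hh.2.symm hne

lemma mulYL_encL (ks : List ℕ) : mulYL (encL ks) = (0, true) :: encL ks := by
  cases ks <;> simp [encL, mulYL]

lemma eval_nf (ks : List ℕ) (l : ℕ) (hks : ∀ k ∈ ks, k < n) :
    (FreeMonoid.lift (gens hm hn) (NormalForm ks l)) ⟨([], 0), Valid.nil⟩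
      = ⟨(encL ks, (l : ℤ)), valid_encL hks⟩ := by
  induction ks with
  | nil =>
      have h1 : NormalForm [] l = (FreeMonoid.of 0) ^ l := by
        simp [NormalForm]
      rw [h1, map_pow, FreeMonoid.lift_eval_of,
        show gens hm hn 0 = addXE hm hn 1 from rfl, addXE_pow, addXE_apply]
      apply Subtype.ext
      show (addXL m n (l : ℤ) [], 0 + carry m n (l : ℤ) []) = (encL [], (l : ℤ))
      simp [addXL, carry, encL]
  | cons k ks ih =>
      have h1 : NormalForm (k :: ks) l
          = ((FreeMonoid.of 0) ^ k * FreeMonoid.of 1) * NormalForm ks l := by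
        simp [NormalForm, mul_assoc]
      rw [h1, map_mul, Equiv.Perm.mul_apply,
        ih fun a ha => hks a (by simp [ha]), map_mul, map_pow,
        FreeMonoid.lift_eval_of, FreeMonoid.lift_eval_of,
        show gens hm hn 0 = addXE hm hn 1 from rfl,
        show gens hm hn 1 = mulYE hm hn from rfl, Equiv.Perm.mul_apply]
      have h2 : mulYE hm hn ⟨(encL ks, (l : ℤ)), valid_encL fun a ha => hks a (by simp [ha])⟩
          = ⟨((0, true) :: encL ks, (l : ℤ)), by
              rw [← mulYL_encL]
              exact valid_mulYL hn (valid_encL fun a ha => hks a (by simp [ha]))⟩ := by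
        apply Subtype.ext
        show (mulYL (encL ks), (l : ℤ)) = ((0, true) :: encL ks, (l : ℤ))
        rw [mulYL_encL]
      rw [h2, addXE_pow, addXE_apply]
      apply Subtype.ext
      have hk0 : (0 : ℤ) ≤ (k : ℤ) := Int.natCast_nonneg k
      have hkn : (k : ℤ) < bnd m n true := by
        show ((k : ℤ)) < (n : ℤ)
        exact_mod_cast hks k (by simp)
      show (addXL m n (k : ℤ) ((0, true) :: encL ks),
          (l : ℤ) + carry m n (k : ℤ) ((0, true) :: encL ks)) = (encL (k :: ks), (l : ℤ))
      rw [Prod.mk.injEq]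
      have hmod : (0 + (k : ℤ)) % bnd m n true = (k : ℤ) := by
        rw [zero_add]; exact Int.emod_eq_of_lt hk0 hkn
      have hdiv : (0 + (k : ℤ)) / bnd m n true = 0 := by
        rw [zero_add]; exact Int.ediv_eq_zero_of_lt hk0 hkn
      have hvks : Valid m n (encL ks) := valid_encL fun a ha => hks a (by simp [ha])
      constructor
      · show ((0 + (k:ℤ)) % bnd m n true, true)
            :: addXL m n ((0 + (k:ℤ)) / bnd m n true * cbnd m n true) (encL ks)
          = encL (k :: ks)
        rw [hmod, hdiv, zero_mul, addXL_zero hvks]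
        rfl
      · show (l : ℤ) + carry m n ((0 + (k:ℤ)) / bnd m n true * cbnd m n true) (encL ks) = (l : ℤ)
        rw [hdiv, zero_mul, carry_zero hvks, add_zero]

end Hom

end BSP

/-- The natural map from words over `{x,y}` to the Baumslag–Solitar group `G(m,n)`
induces a semigroup homomorphism `S(m,n) → G(m,n)`, and the normal-form words
`x^{k_0} y x^{k_1} ⋯ y x^{k_j} y x^l` with all `k_i < n` (and `l ≥ 1` if there are
no occurrences of `y`) represent pairwise distinct elements of `G(m,n)`. -/
theorem stmt19 (m n : ℕ) (hm : 1 ≤ m) (hn : 1 ≤ n) :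
    (∃ φ : BS m n →* BSG m n,
      ∀ w : FreeMonoid (Fin 2), φ ((conGen (BSrel m n)).mk' w) = toBSG m n w) ∧
    ∀ (ks ks' : List ℕ) (l l' : ℕ), (∀ k ∈ ks, k < n) → (∀ k ∈ ks', k < n) →
      (ks = [] → 1 ≤ l) → (ks' = [] → 1 ≤ l') →
      toBSG m n (NormalForm ks l) = toBSG m n (NormalForm ks' l') →
      ks = ks' ∧ l = l' := by
  constructor
  · -- the semigroup homomorphism
    have key : (PresentedGroup.of (1 : Fin 2) : BSG m n) * (PresentedGroup.of 0) ^ m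
        = (PresentedGroup.of 0) ^ n * PresentedGroup.of 1 := by
      have h1 : (QuotientGroup.mk (FreeGroup.of (1 : Fin 2) * FreeGroup.of 0 ^ m
          * (FreeGroup.of 0 ^ n * FreeGroup.of 1)⁻¹) : BSG m n) = 1 :=
        (QuotientGroup.eq_one_iff _).mpr
          (Subgroup.subset_normalClosure (by simp [BSGrels]))
      rw [QuotientGroup.mk_mul, QuotientGroup.mk_inv, QuotientGroup.mk_mul,
        QuotientGroup.mk_pow, QuotientGroup.mk_mul, QuotientGroup.mk_pow,
        mul_inv_eq_one] at h1
      exact h1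
    have hker : conGen (BSrel m n) ≤ Con.ker (toBSG m n) := by
      apply Con.conGen_le.mpr
      rintro a b ⟨ha, hb⟩
      subst ha; subst hb
      rw [Con.ker_rel]
      simpa [toBSG, map_mul, map_pow, FreeMonoid.lift_eval_of] using key
    exact ⟨Con.lift _ _ hker, fun w => Con.lift_mk' hker w⟩
  · intro ks ks' l l' hks hks' _ _ heq
    have h1 := congrArg (BSP.psi hm hn) heq
    rw [BSP.psi_toBSG, BSP.psi_toBSG] at h1
    have h2 := DFunLike.congr_fun h1 (⟨([], 0), BSP.Valid.nil⟩ : BSP.Omega m n)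
    rw [BSP.eval_nf hm hn ks l hks, BSP.eval_nf hm hn ks' l' hks'] at h2
    have h3 : BSP.encL ks = BSP.encL ks' ∧ (l : ℤ) = (l' : ℤ) := by
      have := Subtype.mk_eq_mk.mp h2
      exact ⟨congrArg Prod.fst this, congrArg Prod.snd this⟩
    exact ⟨BSP.encL_inj h3.1, by exact_mod_cast h3.2⟩
end
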